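/- Let H be a Hilbert space and a : H × H → ℝ a bounded bilinear form satisfying a Gårding inequality: there is a compact operator B : H → H' and c > 0 with ⟨(A+B)u, u⟩ ≥ c‖u‖² for all u ∈ H, where A : H → H' is the operator induced by a. Then A is a Fredholm operator of index zero; in particular, if the homogeneous equation a(u,v) = 0 for all v ∈ H implies u = 0, then for every bounded linear functional b ∈ H' there is a unique u ∈ H with a(u,v) = b(v) for all v, and ‖u‖ ≤ C‖b‖_{H'}. -/

import Mathlib

open NormedSpace

section FredholmAux

open InnerProductSpace Filter Topology Metric RealInnerProductSpace

variable {H : Type*} [NormedAddCommGroup H] [InnerProductSpace ℝ H] [CompleteSpace H]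

/-- A compact perturbation of the identity that is injective is bounded below. -/
lemma bdd_below_of_compact_inj (T : H →L[ℝ] H) (hT : IsCompactOperator ⇑T)
    (hi : Function.Injective ⇑((1 : H →L[ℝ] H) - T)) :
    ∃ c > 0, ∀ u, c * ‖u‖ ≤ ‖((1 : H →L[ℝ] H) - T) u‖ := by
  set S := (1 : H →L[ℝ] H) - T with hSdef
  by_contra hcon
  push_neg at hcon
  have key : ∀ n : ℕ, ∃ v : H, ‖v‖ = 1 ∧ ‖S v‖ < 1 / (n + 1) := by
    intro n
    obtain ⟨u, hu⟩ := hcon (1 / ((n : ℝ) + 1)) (by positivity)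
    have hu0 : u ≠ 0 := by
      rintro rfl; simp at hu
    have hnu : (0 : ℝ) < ‖u‖ := norm_pos_iff.2 hu0
    refine ⟨‖u‖⁻¹ • u, ?_, ?_⟩
    · rw [norm_smul, norm_inv, norm_norm, inv_mul_cancel₀ hnu.ne']
    · rw [map_smul, norm_smul, norm_inv, norm_norm]
      rw [inv_mul_lt_iff₀ hnu]
      calc ‖S u‖ < 1 / ((n : ℝ) + 1) * ‖u‖ := hu
        _ = ‖u‖ * (1 / ((n : ℝ) + 1)) := by ring
  choose v hv1 hv2 using key
  have hcomp := IsCompactOperator.isCompact_closure_image_closedBall hT 1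
  have hmem : ∀ n, T (v n) ∈ closure (⇑T '' closedBall (0 : H) 1) := fun n =>
    subset_closure ⟨v n, by simp [mem_closedBall_zero_iff, hv1 n], rfl⟩
  obtain ⟨y, -, φ, hφ, hy⟩ := hcomp.tendsto_subseq hmem
  have hS0 : Tendsto (fun n => S (v n)) atTop (𝓝 0) := by
    rw [tendsto_zero_iff_norm_tendsto_zero]
    exact squeeze_zero (fun n => norm_nonneg _) (fun n => (hv2 n).le)
      tendsto_one_div_add_atTop_nhds_zero_nat
  have hS0' : Tendsto (fun n => S (v (φ n))) atTop (𝓝 0) := hS0.comp hφ.tendsto_atTop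
  have hdecomp : ∀ n, v (φ n) = S (v (φ n)) + T (v (φ n)) := by
    intro n
    simp only [hSdef, ContinuousLinearMap.sub_apply, ContinuousLinearMap.one_apply]
    abel
  have hvconv : Tendsto (fun n => v (φ n)) atTop (𝓝 (0 + y)) := by
    have := hS0'.add hy
    simpa only [Function.comp_def, ← hdecomp] using this
  rw [zero_add] at hvconv
  have hynorm : ‖y‖ = 1 := by
    have h1 : Tendsto (fun n => ‖v (φ n)‖) atTop (𝓝 ‖y‖) := hvconv.norm
    simp only [hv1] at h1
    exact tendsto_nhds_unique h1 tendsto_const_nhds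
  have hSy : S y = 0 := by
    have h1 : Tendsto (fun n => S (v (φ n))) atTop (𝓝 (S y)) :=
      (S.continuous.tendsto y).comp hvconv
    exact tendsto_nhds_unique h1 hS0'
  have : y = 0 := hi (by simpa using hSy)
  rw [this, norm_zero] at hynorm
  norm_num at hynorm

/-- The image of a closed submodule under a bounded-below operator is closed. -/
lemma image_closed_of_bddBelow (S : H →L[ℝ] H) {c : ℝ} (hc : 0 < c)
    (hb : ∀ u, c * ‖u‖ ≤ ‖S u‖) (N : Submodule ℝ H) (hN : IsClosed (N : Set H)) :
    IsClosed (⇑S '' (N : Set H)) := by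
  rw [← isSeqClosed_iff_isClosed]
  intro x z hxmem hxz
  choose y hyN hySy using hxmem
  have hcauchy : CauchySeq x := hxz.cauchySeq
  have hycauchy : CauchySeq y := by
    rw [Metric.cauchySeq_iff] at hcauchy ⊢
    intro ε hε
    obtain ⟨N₀, hN₀⟩ := hcauchy (c * ε) (by positivity)
    refine ⟨N₀, fun m hm n hn => ?_⟩
    have h1 := hb (y m - y n)
    rw [map_sub] at h1
    have hd := hN₀ m hm n hn
    rw [dist_eq_norm] at hd ⊢
    rw [hySy m, hySy n] at h1
    rw [← dist_eq_norm, dist_eq_norm] at h1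
    nlinarith
  obtain ⟨w, hw⟩ := cauchySeq_tendsto_of_complete hycauchy
  have hwN : w ∈ N := hN.mem_of_tendsto hw (Filter.Eventually.of_forall hyN)
  refine ⟨w, hwN, ?_⟩
  have h1 : Tendsto (fun n => S (y n)) atTop (𝓝 (S w)) := (S.continuous.tendsto w).comp hw
  have h2 : Tendsto (fun n => S (y n)) atTop (𝓝 z) := by
    have : (fun n => S (y n)) = x := funext hySy
    rw [this]; exact hxz
  exact tendsto_nhds_unique h1 h2

/-- Fredholm alternative: `1 - T` injective with `T` compact implies surjective. -/
lemma surj_of_compact_inj (T : H →L[ℝ] H) (hT : IsCompactOperator ⇑T)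
    (hi : Function.Injective ⇑((1 : H →L[ℝ] H) - T)) :
    Function.Surjective ⇑((1 : H →L[ℝ] H) - T) := by
  obtain ⟨c, hc, hb⟩ := bdd_below_of_compact_inj T hT hi
  set S := (1 : H →L[ℝ] H) - T with hSdef
  by_contra hsurj
  rw [Function.Surjective] at hsurj
  push_neg at hsurj
  obtain ⟨w, hw⟩ := hsurj
  set M : ℕ → Submodule ℝ H := fun n => LinearMap.range ((S ^ n : H →L[ℝ] H) : H →ₗ[ℝ] H) with hM
  have hSpow : ∀ (n : ℕ) (x : H), (S ^ (n + 1)) x = S ((S ^ n) x) := by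
    intro n x; rw [pow_succ']; exact ContinuousLinearMap.mul_apply _ _ _
  have hSpow' : ∀ (n : ℕ) (x : H), (S ^ (n + 1)) x = (S ^ n) (S x) := by
    intro n x; rw [pow_succ]; exact ContinuousLinearMap.mul_apply _ _ _
  have hinjpow : ∀ n, Function.Injective ⇑(S ^ n) := by
    intro n
    induction n with
    | zero => intro a b h; rw [pow_zero] at h; simpa using h
    | succ n ih =>
      intro a b h
      rw [hSpow' n a, hSpow' n b] at h
      exact hi (ih h)
  have hmono : ∀ n, M (n + 1) ≤ M n := by
    rintro n x ⟨y, rfl⟩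
    exact ⟨S y, (hSpow' n y).symm⟩
  have hantitone : Antitone M := antitone_nat_of_succ_le hmono
  have hMclosed : ∀ n, IsClosed (M n : Set H) := by
    intro n
    induction n with
    | zero =>
      have : (M 0 : Set H) = Set.univ := by
        ext x
        simp only [Set.mem_univ, iff_true, SetLike.mem_coe, hM, LinearMap.mem_range]
        exact ⟨x, by rw [pow_zero]; rfl⟩
      rw [this]; exact isClosed_univ
    | succ n ih =>
      have himg : (M (n + 1) : Set H) = ⇑S '' (M n : Set H) := by
        ext x
        simp only [Set.mem_image, SetLike.mem_coe, hM, LinearMap.mem_range]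
        constructor
        · rintro ⟨y, rfl⟩; exact ⟨(S ^ n) y, ⟨y, rfl⟩, (hSpow n y).symm⟩
        · rintro ⟨z, ⟨y, rfl⟩, rfl⟩; exact ⟨y, hSpow n y⟩
      rw [himg]; exact image_closed_of_bddBelow S hc hb (M n) ih
  have hnotin : ∀ n, (S ^ n) w ∈ M n ∧ (S ^ n) w ∉ M (n + 1) := by
    intro n
    refine ⟨⟨w, rfl⟩, ?_⟩
    rintro ⟨y, hy⟩
    rw [ContinuousLinearMap.coe_coe, hSpow' n y] at hy
    exact hw y (hinjpow n hy)
  have hchoice : ∀ n : ℕ, ∃ x : H, ‖x‖ = 1 ∧ x ∈ M n ∧ x ∈ (M (n + 1))ᗮ := by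
    intro n
    haveI : CompleteSpace (M (n + 1)) := (hMclosed (n + 1)).completeSpace_coe
    set yn := (S ^ n) w with hyn
    set d := yn - (Submodule.orthogonalProjection (M (n + 1)) yn : H) with hd
    have hd0 : d ≠ 0 := by
      intro h
      rw [hd, sub_eq_zero] at h
      refine (hnotin n).2 ?_
      show yn ∈ M (n + 1)
      rw [h]
      exact SetLike.coe_mem _
    have hdo : d ∈ (M (n + 1))ᗮ := (M (n + 1)).sub_starProjection_mem_orthogonal yn
    have hdM : d ∈ M n :=
      Submodule.sub_mem _ (hnotin n).1
        (hmono n (SetLike.coe_mem (Submodule.orthogonalProjection (M (n + 1)) yn)))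
    have hnd : (0 : ℝ) < ‖d‖ := norm_pos_iff.2 hd0
    exact ⟨‖d‖⁻¹ • d, by rw [norm_smul, norm_inv, norm_norm, inv_mul_cancel₀ hnd.ne'],
      Submodule.smul_mem _ _ hdM, Submodule.smul_mem _ _ hdo⟩
  choose x hx1 hxM hxO using hchoice
  have hsep : ∀ m n : ℕ, n < m → 1 ≤ ‖T (x n) - T (x m)‖ := by
    intro m n hnm
    set z := S (x n) + x m - S (x m) with hzdef
    have hz : z ∈ M (n + 1) := by
      have h1 : S (x n) ∈ M (n + 1) := by
        obtain ⟨y, hy⟩ := hxM n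
        exact ⟨y, by rw [ContinuousLinearMap.coe_coe, hSpow n y, ← hy]; rfl⟩
      have h2 : x m ∈ M (n + 1) := hantitone (by omega : n + 1 ≤ m) (hxM m)
      have h3 : S (x m) ∈ M (n + 1) := by
        refine hantitone (by omega : n + 1 ≤ m + 1) ?_
        obtain ⟨y, hy⟩ := hxM m
        exact ⟨y, by rw [ContinuousLinearMap.coe_coe, hSpow m y, ← hy]; rfl⟩
      exact Submodule.sub_mem _ (Submodule.add_mem _ h1 h2) h3
    have hTx : T (x n) - T (x m) = x n - z := by
      simp only [hzdef, hSdef, ContinuousLinearMap.sub_apply, ContinuousLinearMap.one_apply]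
      abel
    rw [hTx]
    have hperp : ⟪x n, z⟫_ℝ = 0 := by
      rw [real_inner_comm]
      exact (Submodule.mem_orthogonal _ _).1 (hxO n) _ hz
    have hns := norm_sub_sq_real (x n) z
    rw [hperp, hx1 n] at hns
    nlinarith [norm_nonneg (x n - z), norm_nonneg z, sq_nonneg ‖z‖]
  have hcomp := IsCompactOperator.isCompact_closure_image_closedBall hT 1
  have hmem : ∀ n, T (x n) ∈ closure (⇑T '' closedBall (0 : H) 1) := fun n =>
    subset_closure ⟨x n, by simp [mem_closedBall_zero_iff, hx1 n], rfl⟩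
  obtain ⟨y, -, φ, hφ, hy⟩ := hcomp.tendsto_subseq hmem
  have hcs : CauchySeq (fun n => T (x (φ n))) := hy.cauchySeq
  obtain ⟨N₀, hN₀⟩ := Metric.cauchySeq_iff'.1 hcs 1 one_pos
  have h1 := hN₀ (N₀ + 1) (by omega)
  have h2 := hsep (φ (N₀ + 1)) (φ N₀) (hφ (by omega))
  rw [dist_eq_norm] at h1
  rw [norm_sub_rev] at h2
  linarith

end FredholmAux

open InnerProductSpace Filter Topology Metric RealInnerProductSpace in
/-- Gårding inequality and the Fredholm alternative: if the bounded bilinear form `a`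
(with induced operator `A : H → H'`) satisfies `⟨(A+B)u, u⟩ ≥ c‖u‖²` for a compact
`B : H → H'`, and the homogeneous equation has only the trivial solution, then for
every `b ∈ H'` there is a unique `u` with `a(u,v) = b(v)` for all `v`, and
`‖u‖ ≤ C‖b‖`. -/
theorem garding_fredholm_wellposed
    {H : Type*} [NormedAddCommGroup H] [InnerProductSpace ℝ H] [CompleteSpace H]
    (a : H → H → ℝ)
    (A B : H →L[ℝ] StrongDual ℝ H)
    (hA : ∀ u v : H, A u v = a u v)
    (hB : IsCompactOperator B)
    (c : ℝ) (hc : 0 < c)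
    (hgarding : ∀ u : H, A u u + B u u ≥ c * ‖u‖ ^ 2)
    (hinj : ∀ u : H, (∀ v : H, a u v = 0) → u = 0) :
    ∃ C > 0, (∀ b : StrongDual ℝ H, ∃! u : H, ∀ v : H, a u v = b v) ∧
      ∀ (b : StrongDual ℝ H) (u : H), (∀ v : H, a u v = b v) → ‖u‖ ≤ C * ‖b‖ := by
  classical
  have coer : IsCoercive (A + B) := by
    refine ⟨c, hc, fun u => ?_⟩
    simp only [ContinuousLinearMap.add_apply]
    nlinarith [hgarding u]
  set E := coer.continuousLinearEquivOfBilin with hEdef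
  have hE : ∀ u w : H, ⟪E u, w⟫_ℝ = A u w + B u w := by
    intro u w
    have := coer.continuousLinearEquivOfBilin_apply u w
    simpa only [ContinuousLinearMap.add_apply] using this
  set Bf : H →L[ℝ] H := InnerProductSpace.continuousLinearMapOfBilin (𝕜 := ℝ) B with hBfdef
  have hBf : ∀ u v : H, ⟪Bf u, v⟫_ℝ = B u v := fun u v =>
    InnerProductSpace.continuousLinearMapOfBilin_apply B u v
  set T : H →L[ℝ] H := E.symm.toContinuousLinearMap.comp Bf with hTdef
  have hTc : IsCompactOperator ⇑T := by
    have h1 : ⇑T = (fun w => E.symm ((InnerProductSpace.toDual ℝ H).symm w)) ∘ ⇑B := by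
      funext u
      have : Bf u = (InnerProductSpace.toDual ℝ H).symm (B u) := by
        apply ext_inner_right ℝ
        intro v
        rw [hBf, InnerProductSpace.toDual_symm_apply]
      simp [hTdef, this]
    rw [h1]
    exact hB.continuous_comp
      (E.symm.continuous.comp (InnerProductSpace.toDual ℝ H).symm.continuous)
  have hETu : ∀ u : H, E (T u) = Bf u := by
    intro u
    simp [hTdef]
  have key : ∀ u v : H, a u v = ⟪E (((1 : H →L[ℝ] H) - T) u), v⟫_ℝ := by
    intro u v
    rw [ContinuousLinearMap.sub_apply, ContinuousLinearMap.one_apply, map_sub,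
      inner_sub_left, hE, hETu, hBf, ← hA u v]
    ring
  have hSinj : Function.Injective ⇑((1 : H →L[ℝ] H) - T) := by
    intro u₁ u₂ h
    have h0 : ∀ v, a (u₁ - u₂) v = 0 := by
      intro v
      rw [key, map_sub, h, sub_self, map_zero, inner_zero_left]
    have := hinj _ h0
    rwa [sub_eq_zero] at this
  obtain ⟨c₀, hc₀, hbdd⟩ := bdd_below_of_compact_inj T hTc hSinj
  have hsurj := surj_of_compact_inj T hTc hSinj
  have hCpos : (0 : ℝ) < ‖E.symm.toContinuousLinearMap‖ / c₀ + 1 := by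
    have : (0 : ℝ) ≤ ‖E.symm.toContinuousLinearMap‖ / c₀ :=
      div_nonneg (norm_nonneg _) hc₀.le
    linarith
  refine ⟨‖E.symm.toContinuousLinearMap‖ / c₀ + 1, hCpos, fun b => ?_, fun b u hu => ?_⟩
  · obtain ⟨u, hu⟩ := hsurj (E.symm ((InnerProductSpace.toDual ℝ H).symm b))
    refine ⟨u, fun v => ?_, fun u' hu' => ?_⟩
    · rw [key, hu, ContinuousLinearEquiv.apply_symm_apply,
        InnerProductSpace.toDual_symm_apply]
    · apply hSinj
      apply E.injective
      apply ext_inner_right ℝ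
      intro v
      rw [← key, ← key, hu' v]
      rw [key, hu, ContinuousLinearEquiv.apply_symm_apply,
        InnerProductSpace.toDual_symm_apply]
  · have h2 : E (((1 : H →L[ℝ] H) - T) u) = (InnerProductSpace.toDual ℝ H).symm b := by
      apply ext_inner_right ℝ
      intro v
      rw [← key, hu v, InnerProductSpace.toDual_symm_apply]
    have h3 : ‖((1 : H →L[ℝ] H) - T) u‖ ≤ ‖E.symm.toContinuousLinearMap‖ * ‖b‖ := by
      have heq : ((1 : H →L[ℝ] H) - T) u
          = E.symm.toContinuousLinearMap ((InnerProductSpace.toDual ℝ H).symm b) := by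
        rw [← h2]
        simp
      rw [heq]
      calc ‖E.symm.toContinuousLinearMap ((InnerProductSpace.toDual ℝ H).symm b)‖
          ≤ ‖E.symm.toContinuousLinearMap‖ * ‖(InnerProductSpace.toDual ℝ H).symm b‖ :=
            E.symm.toContinuousLinearMap.le_opNorm _
        _ = ‖E.symm.toContinuousLinearMap‖ * ‖b‖ := by
            rw [LinearIsometryEquiv.norm_map]
    have h4 := hbdd u
    have h5 : ‖u‖ ≤ ‖E.symm.toContinuousLinearMap‖ / c₀ * ‖b‖ := by
      rw [div_mul_eq_mul_div, le_div_iff₀ hc₀]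
      nlinarith
    nlinarith [norm_nonneg b]
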